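/- β(3) = (π³/24) · √(691/1155) · ∏ over odd primes p of (1 - χ₄(p) · 2/(p³ + p^(-3)))^(-1/2). -/

import Mathlib

open Real

/-- The nontrivial Dirichlet character mod 4, with values in ℂ. -/
noncomputable def chi4C : DirichletCharacter ℂ 4 := ZMod.χ₄.ringHomComp (Int.castRingHom ℂ)

/-- The Dirichlet beta function, as the L-function of the nontrivial character mod 4. -/
noncomputable def dirichletBeta (s : ℂ) : ℂ := DirichletCharacter.LFunction chi4C s

/-- The Dirichlet character mod 4 as a real-valued function on ℕ. -/
noncomputable def chi4 (n : ℕ) : ℝ :=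
  if n % 4 = 1 then 1 else if n % 4 = 3 then -1 else 0

private lemma bern5 : bernoulli' 5 = 0 := by
  rw [bernoulli'_def]
  simp [Finset.sum_range_succ, bernoulli'_zero, bernoulli'_one, bernoulli'_two,
    bernoulli'_three, bernoulli'_four]
  norm_num [Nat.choose]

private lemma bern6 : bernoulli' 6 = 1/42 := by
  rw [bernoulli'_def]
  simp [Finset.sum_range_succ, bernoulli'_zero, bernoulli'_one, bernoulli'_two,
    bernoulli'_three, bernoulli'_four, bern5]
  norm_num [Nat.choose]

private lemma bern7 : bernoulli' 7 = 0 := by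
  rw [bernoulli'_def]
  simp [Finset.sum_range_succ, bernoulli'_zero, bernoulli'_one, bernoulli'_two,
    bernoulli'_three, bernoulli'_four, bern5, bern6]
  norm_num [Nat.choose]

private lemma bern8 : bernoulli' 8 = -1/30 := by
  rw [bernoulli'_def]
  simp [Finset.sum_range_succ, bernoulli'_zero, bernoulli'_one, bernoulli'_two,
    bernoulli'_three, bernoulli'_four, bern5, bern6, bern7]
  norm_num [Nat.choose]

private lemma bern9 : bernoulli' 9 = 0 := by
  rw [bernoulli'_def]
  simp [Finset.sum_range_succ, bernoulli'_zero, bernoulli'_one, bernoulli'_two,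
    bernoulli'_three, bernoulli'_four, bern5, bern6, bern7, bern8]
  norm_num [Nat.choose]

private lemma bern10 : bernoulli' 10 = 5/66 := by
  rw [bernoulli'_def]
  simp [Finset.sum_range_succ, bernoulli'_zero, bernoulli'_one, bernoulli'_two,
    bernoulli'_three, bernoulli'_four, bern5, bern6, bern7, bern8, bern9]
  norm_num [Nat.choose]

private lemma bern11 : bernoulli' 11 = 0 := by
  rw [bernoulli'_def]
  simp [Finset.sum_range_succ, bernoulli'_zero, bernoulli'_one, bernoulli'_two,
    bernoulli'_three, bernoulli'_four, bern5, bern6, bern7, bern8, bern9, bern10]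
  norm_num [Nat.choose]

private lemma bern12 : bernoulli' 12 = -691/2730 := by
  rw [bernoulli'_def]
  simp [Finset.sum_range_succ, bernoulli'_zero, bernoulli'_one, bernoulli'_two,
    bernoulli'_three, bernoulli'_four, bern5, bern6, bern7, bern8, bern9, bern10, bern11]
  norm_num [Nat.choose]

private lemma bernoulli_six : bernoulli 6 = 1/42 := by
  rw [bernoulli_eq_bernoulli'_of_ne_one (by norm_num), bern6]

private lemma bernoulli_twelve : bernoulli 12 = -691/2730 := by
  rw [bernoulli_eq_bernoulli'_of_ne_one (by norm_num), bern12]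

private lemma chi4_eq_sin (n : ℕ) : chi4 n = Real.sin (2 * π * n * (1/4)) := by
  have h : (n : ℝ) = 4 * (n / 4 : ℕ) + (n % 4 : ℕ) := by
    conv_lhs => rw [← Nat.div_add_mod n 4]
    push_cast
    ring
  rw [show 2 * π * n * (1/4) = π * n / 2 by ring, h]
  have hper : ∀ r : ℝ, Real.sin (π * (4 * (n / 4 : ℕ) + r) / 2) = Real.sin (π * r / 2) := by
    intro r
    rw [show π * (4 * (n / 4 : ℕ) + r) / 2 = π * r / 2 + (n / 4 : ℕ) * (2 * π) by ring]
    exact Real.sin_add_nat_mul_two_pi _ _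
  rw [hper]
  have h4 : n % 4 < 4 := Nat.mod_lt _ (by norm_num)
  unfold chi4
  interval_cases h : n % 4 <;> simp_all
  rw [show π * 3 / 2 = π + π/2 by ring, Real.sin_add]
  simp

private lemma chi4_mul (m n : ℕ) : chi4 (m * n) = chi4 m * chi4 n := by
  unfold chi4
  rw [Nat.mul_mod]
  have hm : m % 4 < 4 := Nat.mod_lt _ (by norm_num)
  have hn : n % 4 < 4 := Nat.mod_lt _ (by norm_num)
  interval_cases hm' : m % 4 <;> interval_cases hn' : n % 4 <;> norm_num

private lemma chi4_abs_le (n : ℕ) : |chi4 n| ≤ 1 := by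
  unfold chi4; split_ifs <;> norm_num

private lemma hasSum_chi4 : HasSum (fun n : ℕ => chi4 n * ((n : ℝ) ^ 3)⁻¹) (π ^ 3 / 32) := by
  have h := hasSum_one_div_nat_pow_mul_sin (k := 1) (by norm_num)
    (x := 1/4) (by constructor <;> norm_num)
  have hval : ((-1 : ℝ)) ^ (1 + 1) * (2 * π) ^ (2 * 1 + 1) / 2 / ((2 * 1 + 1).factorial : ℝ) *
      ((Polynomial.bernoulli (2 * 1 + 1)).map (algebraMap ℚ ℝ)).eval ((1:ℝ)/4) = π ^ 3 / 32 := by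
    have : ((Polynomial.bernoulli 3).map (algebraMap ℚ ℝ)).eval ((1:ℝ)/4) = 3/64 := by
      simp [Polynomial.bernoulli, Finset.sum_range_succ, bernoulli_eq_bernoulli'_of_ne_one,
        bernoulli'_zero, bernoulli'_one, bernoulli'_two, bernoulli'_three, bernoulli_one]
      norm_num [Nat.choose]
    norm_num [this, Nat.factorial]
    ring
  rw [hval] at h
  convert h using 2 with n
  rw [← chi4_eq_sin]
  push_cast
  ring

private lemma chi4C_nat (n : ℕ) : chi4C (n : ZMod 4) = ((chi4 n : ℝ) : ℂ) := by
  have h : chi4C (n : ZMod 4) = ((ZMod.χ₄ (n : ZMod 4) : ℤ) : ℂ) := rfl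
  rw [h, ZMod.χ₄_nat_eq_if_mod_four]
  unfold chi4
  have h4 : n % 4 < 4 := Nat.mod_lt _ (by norm_num)
  have h2 : n % 2 = n % 4 % 2 := (Nat.mod_mod_of_dvd n (by norm_num)).symm
  interval_cases h : n % 4 <;> simp_all

private lemma beta_three : dirichletBeta 3 = ((π ^ 3 / 32 : ℝ) : ℂ) := by
  rw [dirichletBeta, DirichletCharacter.LFunction_eq_LSeries _ (by norm_num)]
  have h : HasSum (fun n : ℕ => LSeries.term (fun m : ℕ => chi4C (m : ZMod 4)) 3 n)
      ((π ^ 3 / 32 : ℝ) : ℂ) := by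
    have h0 := Complex.ofRealCLM.hasSum hasSum_chi4
    refine h0.congr_fun fun n => ?_
    rcases eq_or_ne n 0 with rfl | hn
    · simp [LSeries.term, chi4]
    · rw [LSeries.term_of_ne_zero hn, chi4C_nat]
      have h3 : ((n : ℂ)) ^ (3 : ℂ) = ((n : ℂ)) ^ (3 : ℕ) := by
        rw [show (3 : ℂ) = ((3 : ℕ) : ℂ) by norm_num, Complex.cpow_natCast]
      rw [h3]
      simp only [Complex.ofRealCLM_apply, Complex.ofReal_mul, Complex.ofReal_inv,
        Complex.ofReal_pow, Complex.ofReal_natCast]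
      rw [div_eq_mul_inv]
  simp only [LSeries]
  exact h.tsum_eq

private noncomputable def fchi : ℕ →*₀ ℝ where
  toFun n := chi4 n * ((n : ℝ) ^ 3)⁻¹
  map_zero' := by simp [chi4]
  map_one' := by simp [chi4]
  map_mul' m n := by
    rw [chi4_mul]
    push_cast
    rw [mul_pow, mul_inv]
    ring

private noncomputable def fpow6 : ℕ →*₀ ℝ where
  toFun n := ((n : ℝ) ^ 6)⁻¹
  map_zero' := by norm_num
  map_one' := by norm_num
  map_mul' m n := by push_cast; rw [mul_pow, mul_inv]

private noncomputable def fpow12 : ℕ →*₀ ℝ where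
  toFun n := ((n : ℝ) ^ 12)⁻¹
  map_zero' := by norm_num
  map_one' := by norm_num
  map_mul' m n := by push_cast; rw [mul_pow, mul_inv]

private lemma summable_pow_inv {k : ℕ} (hk : 1 < k) :
    Summable (fun n : ℕ => ‖((n : ℝ) ^ k)⁻¹‖) := by
  have h := Real.summable_one_div_nat_pow.mpr hk
  refine h.congr fun n => ?_
  rw [one_div, Real.norm_eq_abs, abs_of_nonneg (by positivity)]

private lemma summable_fchi : Summable (fun n : ℕ => ‖fchi n‖) := by
  refine Summable.of_nonneg_of_le (fun n => norm_nonneg _) (fun n => ?_)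
    (summable_pow_inv (k := 3) (by norm_num))
  show ‖chi4 n * ((n : ℝ) ^ 3)⁻¹‖ ≤ ‖((n : ℝ) ^ 3)⁻¹‖
  rw [norm_mul]
  calc ‖chi4 n‖ * ‖((n : ℝ) ^ 3)⁻¹‖ ≤ 1 * ‖((n : ℝ) ^ 3)⁻¹‖ :=
        mul_le_mul_of_nonneg_right (chi4_abs_le n) (norm_nonneg _)
    _ = ‖((n : ℝ) ^ 3)⁻¹‖ := one_mul _

private lemma hasProd_L :
    HasProd (fun p : Nat.Primes => (1 - chi4 p * (((p : ℕ) : ℝ) ^ 3)⁻¹)⁻¹) (π ^ 3 / 32) := by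
  have h := EulerProduct.eulerProduct_completely_multiplicative_hasProd (f := fchi) summable_fchi
  have hts : ∑' n : ℕ, fchi n = π ^ 3 / 32 := hasSum_chi4.tsum_eq
  rw [hts] at h
  exact h

private lemma hasSum_zeta6 : HasSum (fun n : ℕ => 1 / (n : ℝ) ^ 6) (π ^ 6 / 945) := by
  have h := hasSum_zeta_nat (k := 3) (by norm_num)
  have hv : ((-1 : ℝ)) ^ (3 + 1) * 2 ^ (2 * 3 - 1) * π ^ (2 * 3) * ((bernoulli (2 * 3) : ℚ) : ℝ)
      / ((2 * 3).factorial : ℝ) = π ^ 6 / 945 := by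
    norm_num [bernoulli_six, Nat.factorial]
    ring
  rw [hv] at h
  exact h

private lemma hasSum_zeta12 :
    HasSum (fun n : ℕ => 1 / (n : ℝ) ^ 12) (691 * π ^ 12 / 638512875) := by
  have h := hasSum_zeta_nat (k := 6) (by norm_num)
  have hv : ((-1 : ℝ)) ^ (6 + 1) * 2 ^ (2 * 6 - 1) * π ^ (2 * 6) * ((bernoulli (2 * 6) : ℚ) : ℝ)
      / ((2 * 6).factorial : ℝ) = 691 * π ^ 12 / 638512875 := by
    norm_num [bernoulli_twelve, Nat.factorial]
    ring
  rw [hv] at h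
  exact h

private lemma hasProd_z6 :
    HasProd (fun p : Nat.Primes => (1 - (((p : ℕ) : ℝ) ^ 6)⁻¹)⁻¹) (π ^ 6 / 945) := by
  have h := EulerProduct.eulerProduct_completely_multiplicative_hasProd (f := fpow6)
    (summable_pow_inv (by norm_num))
  have hts : ∑' n : ℕ, fpow6 n = π ^ 6 / 945 := by
    refine HasSum.tsum_eq ?_
    exact hasSum_zeta6.congr_fun fun n => by simp [fpow6, one_div]
  rw [hts] at h
  exact h

private lemma hasProd_z12 :
    HasProd (fun p : Nat.Primes => (1 - (((p : ℕ) : ℝ) ^ 12)⁻¹)⁻¹)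
      (691 * π ^ 12 / 638512875) := by
  have h := EulerProduct.eulerProduct_completely_multiplicative_hasProd (f := fpow12)
    (summable_pow_inv (by norm_num))
  have hts : ∑' n : ℕ, fpow12 n = 691 * π ^ 12 / 638512875 := by
    refine HasSum.tsum_eq ?_
    exact hasSum_zeta12.congr_fun fun n => by simp [fpow12, one_div]
  rw [hts] at h
  exact h

private lemma hasProd_div {ι : Type*} {f g : ι → ℝ} {a b : ℝ}
    (hf : HasProd f a) (hg : HasProd g b) (hb : b ≠ 0) :
    HasProd (fun i => f i / g i) (a / b) := by
  have h := Filter.Tendsto.div hf hg hb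
  refine h.congr fun s => ?_
  simp [Pi.div_apply, Finset.prod_div_distrib]

private lemma hasProd_update_one {ι : Type*} [DecidableEq ι] {f : ι → ℝ} {a : ℝ}
    (h : HasProd f a) (i : ι) (hi : f i ≠ 0) :
    HasProd (Function.update f i 1) (a / f i) := by
  have h2 : Filter.Tendsto (fun s : Finset ι => (∏ j ∈ s, f j) / f i)
      Filter.atTop (nhds (a / f i)) := h.div_const _
  refine h2.congr' ?_
  filter_upwards [Filter.eventually_ge_atTop ({i} : Finset ι)] with s hs
  have his : i ∈ s := Finset.singleton_subset_iff.mp hs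
  rw [Finset.prod_update_of_mem his, one_mul,
    Finset.prod_eq_mul_prod_sdiff_singleton_of_mem his f, mul_comm, mul_div_assoc,
    div_self hi, mul_one]

private lemma sqrt_finset_prod {ι : Type*} (s : Finset ι) (f : ι → ℝ) (h0 : ∀ i, 0 ≤ f i) :
    Real.sqrt (∏ i ∈ s, f i) = ∏ i ∈ s, Real.sqrt (f i) := by
  classical
  induction s using Finset.induction with
  | empty => simp
  | insert _ _ hnot ih =>
      rw [Finset.prod_insert hnot, Finset.prod_insert hnot, Real.sqrt_mul (h0 _), ih]

private lemma hasProd_sqrt {ι : Type*} {f : ι → ℝ} {a : ℝ}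
    (h0 : ∀ i, 0 ≤ f i) (h : HasProd f a) :
    HasProd (fun i => Real.sqrt (f i)) (Real.sqrt a) := by
  have hc := (Real.continuous_sqrt.tendsto a).comp h
  refine hc.congr fun s => ?_
  simp only [Function.comp_apply]
  exact sqrt_finset_prod s f h0

private def two' : Nat.Primes := ⟨2, Nat.prime_two⟩

private noncomputable def czeta : Nat.Primes → ℝ := fun p => 1 + (((p : ℕ) : ℝ) ^ 6)⁻¹

private lemma one_lt_cast (p : Nat.Primes) : (1 : ℝ) < ((p : ℕ) : ℝ) := by
  exact_mod_cast p.2.one_lt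

private lemma hasProd_czeta :
    HasProd czeta ((π ^ 6 / 945) / (691 * π ^ 12 / 638512875)) := by
  have h := hasProd_div hasProd_z6 hasProd_z12 (by positivity)
  refine HasProd.congr_fun h fun p => ?_
  have hx : (1 : ℝ) < ((p : ℕ) : ℝ) := one_lt_cast p
  set x : ℝ := ((p : ℕ) : ℝ)
  have h1 : (1:ℝ) < x ^ 6 := one_lt_pow₀ hx (by norm_num)
  have h6 : (1:ℝ) - (x^6)⁻¹ ≠ 0 := sub_ne_zero_of_ne (ne_of_gt (inv_lt_one_of_one_lt₀ h1))
  have key : (1 : ℝ) - (x^12)⁻¹ = (1 - (x^6)⁻¹) * (1 + (x^6)⁻¹) := by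
    have h2 : ((x^12 : ℝ))⁻¹ = (x^6)⁻¹ * (x^6)⁻¹ := by rw [← mul_inv, ← pow_add]
    rw [h2]; ring
  show 1 + (x ^ 6)⁻¹ = (1 - (x^6)⁻¹)⁻¹ / (1 - (x^12)⁻¹)⁻¹
  rw [key, mul_inv, ← div_div, div_self (inv_ne_zero h6), one_div, inv_inv]

/-- The set of odd primes. -/
private def oddPrimes : Set Nat.Primes := {p : Nat.Primes | (p : ℕ) ≠ 2}

private lemma czeta_two : czeta two' = 65/64 := by
  show (1 : ℝ) + (((2 : ℕ) : ℝ) ^ 6)⁻¹ = 65/64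
  norm_num

private lemma hasProd_czeta_odd :
    HasProd (fun p : {p : Nat.Primes // (p : ℕ) ≠ 2} => czeta p.1)
      ((π ^ 6 / 945) / (691 * π ^ 12 / 638512875) / (65/64)) := by
  classical
  have h := hasProd_update_one hasProd_czeta two' (by rw [czeta_two]; norm_num)
  rw [czeta_two] at h
  have hind : Function.update czeta two' 1 = oddPrimes.mulIndicator czeta := by
    funext p
    by_cases hp : (p : ℕ) = 2
    · have hp2 : p = two' := Subtype.ext hp
      subst hp2
      rw [Function.update_self]
      rw [Set.mulIndicator_of_notMem (show two' ∉ oddPrimes from fun h' => h' hp)]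
    · have hp2 : p ≠ two' := fun hcon => hp (by rw [hcon]; rfl)
      rw [Function.update_of_ne hp2]
      rw [Set.mulIndicator_of_mem (by exact hp) czeta]
  rw [hind] at h
  exact hasProd_subtype_iff_mulIndicator.mpr h

private lemma chi4_two_pow : chi4 2 = 0 := by unfold chi4; norm_num

private lemma hasProd_L_odd :
    HasProd (fun p : {p : Nat.Primes // (p : ℕ) ≠ 2} =>
      (1 - chi4 p.1 * (((p.1 : ℕ) : ℝ) ^ 3)⁻¹)⁻¹) (π ^ 3 / 32) := by
  classical
  have hind : oddPrimes.mulIndicator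
      (fun p : Nat.Primes => (1 - chi4 p * (((p : ℕ) : ℝ) ^ 3)⁻¹)⁻¹)
      = fun p : Nat.Primes => (1 - chi4 p * (((p : ℕ) : ℝ) ^ 3)⁻¹)⁻¹ := by
    funext p
    by_cases hp : (p : ℕ) = 2
    · rw [Set.mulIndicator_of_notMem (by simp [oddPrimes, hp])]
      rw [hp, chi4_two_pow]
      norm_num
    · rw [Set.mulIndicator_of_mem (show p ∈ oddPrimes from hp)
        (fun p : Nat.Primes => (1 - chi4 p * (((p : ℕ) : ℝ) ^ 3)⁻¹)⁻¹)]
  have h := hasProd_L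
  rw [← hind] at h
  exact hasProd_subtype_iff_mulIndicator.mpr h

private lemma chi4_odd_prime (p : Nat.Primes) (hp : (p : ℕ) ≠ 2) :
    chi4 p = 1 ∨ chi4 p = -1 := by
  have hodd : (p : ℕ) % 2 = 1 := Nat.odd_iff.mp (p.2.odd_of_ne_two hp)
  have h2 : (p : ℕ) % 4 % 2 = 1 := by
    rw [Nat.mod_mod_of_dvd _ (by norm_num)]
    exact hodd
  have h4 : (p : ℕ) % 4 < 4 := Nat.mod_lt _ (by norm_num)
  unfold chi4
  interval_cases h : (p : ℕ) % 4 <;> simp_all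

private lemma factor_eq (p : Nat.Primes) (hp : (p : ℕ) ≠ 2) :
    (1 - chi4 p * (2 / (((p : ℕ) : ℝ) ^ 3 + ((((p : ℕ) : ℝ)) ^ 3)⁻¹))) ^ (-(1 / 2) : ℝ)
      = (1 - chi4 p * (((p : ℕ) : ℝ) ^ 3)⁻¹)⁻¹ * Real.sqrt (czeta p) := by
  have hx : (1 : ℝ) < ((p : ℕ) : ℝ) := one_lt_cast p
  set x : ℝ := ((p : ℕ) : ℝ) with hxdef
  set c : ℝ := chi4 p with hcdef
  have hc : c = 1 ∨ c = -1 := chi4_odd_prime p hp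
  set t : ℝ := x ^ 3 with htdef
  have ht : (1 : ℝ) < t := one_lt_pow₀ hx (by norm_num)
  have ht0 : (0:ℝ) < t := by linarith
  have ht0' : t ≠ 0 := ne_of_gt ht0
  have htt : t + t⁻¹ ≠ 0 := by positivity
  have hA : (0:ℝ) < 1 - c * t⁻¹ := by
    have hinv : t⁻¹ < 1 := inv_lt_one_of_one_lt₀ ht
    have hinv0 : (0:ℝ) < t⁻¹ := by positivity
    rcases hc with hc1 | hc1 <;> rw [hc1] <;> nlinarith
  have hb : 1 - c * (2 / (t + t⁻¹)) = (1 - c * t⁻¹)^2 / (1 + (t^2)⁻¹) := by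
    rcases hc with hc1 | hc1 <;> rw [hc1] <;> (field_simp; ring)
  have hczeta : czeta p = 1 + (t^2)⁻¹ := by
    show (1 : ℝ) + (x ^ 6)⁻¹ = 1 + (t^2)⁻¹
    rw [htdef, ← pow_mul]
  rw [hczeta, hb, Real.rpow_neg (by positivity), ← Real.sqrt_eq_rpow,
    Real.sqrt_div (by positivity) _, Real.sqrt_sq hA.le, inv_div, div_eq_mul_inv, mul_comm]

private lemma tprod_value :
    (∏' p : {p : Nat.Primes // (p : ℕ) ≠ 2},
        (1 - chi4 p * (2 / (((p : ℕ) : ℝ) ^ 3 + ((((p : ℕ) : ℝ)) ^ 3)⁻¹))) ^ (-(1 / 2) : ℝ))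
      = π ^ 3 / 32 * Real.sqrt ((π ^ 6 / 945) / (691 * π ^ 12 / 638512875) / (65/64)) := by
  have hsq := hasProd_sqrt (f := fun p : {p : Nat.Primes // (p : ℕ) ≠ 2} => czeta p.1)
    (fun p => by
      show (0:ℝ) ≤ 1 + (((p.1 : ℕ) : ℝ) ^ 6)⁻¹
      positivity) hasProd_czeta_odd
  have h := hasProd_L_odd.mul hsq
  have h2 := h.congr_fun (g := fun p : {p : Nat.Primes // (p : ℕ) ≠ 2} =>
      (1 - chi4 p * (2 / (((p : ℕ) : ℝ) ^ 3 + ((((p : ℕ) : ℝ)) ^ 3)⁻¹))) ^ (-(1 / 2) : ℝ))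
    (fun p => factor_eq p.1 p.2)
  exact h2.tprod_eq

theorem beta_three_prime_product :
    dirichletBeta 3
      = ((Real.pi ^ 3 / 24 * Real.sqrt (691 / 1155)
          * ∏' p : {p : Nat.Primes // (p : ℕ) ≠ 2},
              (1 - chi4 p * (2 / (((p : ℕ) : ℝ) ^ 3 + ((((p : ℕ) : ℝ)) ^ 3)⁻¹))) ^ (-(1 / 2) : ℝ) : ℝ) : ℂ) := by
  rw [beta_three, tprod_value]
  norm_cast
  symm
  have hpi : (0:ℝ) < π := Real.pi_pos
  have hkey : Real.sqrt (691 / 1155) *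
      Real.sqrt ((π ^ 6 / 945) / (691 * π ^ 12 / 638512875) / (65/64)) = 24 / π ^ 3 := by
    rw [← Real.sqrt_mul (by norm_num)]
    have : (691 / 1155 : ℝ) * ((π ^ 6 / 945) / (691 * π ^ 12 / 638512875) / (65/64))
        = (24 / π ^ 3) ^ 2 := by
      field_simp
      ring
    rw [this, Real.sqrt_sq (by positivity)]
  calc π ^ 3 / 24 * Real.sqrt (691 / 1155) *
        (π ^ 3 / 32 * Real.sqrt ((π ^ 6 / 945) / (691 * π ^ 12 / 638512875) / (65/64)))
      = π ^ 3 / 32 * (π ^ 3 / 24 * (Real.sqrt (691 / 1155) *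
          Real.sqrt ((π ^ 6 / 945) / (691 * π ^ 12 / 638512875) / (65/64)))) := by ring
    _ = π ^ 3 / 32 := by rw [hkey]; field_simp
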